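/- arXiv:1008.3813 — 8 statements merged into one kernel-verified Lean document; each statement's English description precedes it below -/
import Mathlib

section
/- For every integer N ≥ 2 and reals g, h > 0 with max{g, N·h} ≥ 1, one has (1/2)·log(1 + N²gh/(1 + g + N·h)) ≥ (1/2)·log(1 + (1/3)·N·min{g, N·h}). -/
/-! Writing `m ≤ M` for the minimum and maximum of `g` and `N h`, we have `N² g h = N m M` and,
as soon as `M ≥ 1`, `1 + g + N h = 1 + m + M ≤ 3 M`. Hence the SNR `N² g h / (1 + g + N h)` of
amplify-and-forward is at least `N m / 3`, and the claim follows from monotonicity of `log`. -/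

theorem one_add_add_le_three_mul_max {a b : ℝ} (h : 1 ≤ max a b) : 1 + a + b ≤ 3 * max a b := by
  linarith [le_max_left a b, le_max_right a b]

theorem min_div_three_le_mul_div_one_add_add {a b : ℝ} (ha : 0 ≤ a) (hb : 0 ≤ b)
    (h : 1 ≤ max a b) : min a b / 3 ≤ a * b / (1 + a + b) := by
  rw [le_div_iff₀ (by linarith), ← min_mul_max a b]
  calc min a b / 3 * (1 + a + b) ≤ min a b / 3 * (3 * max a b) := by
        have := le_min ha hb
        gcongr
        exact one_add_add_le_three_mul_max h
    _ = min a b * max a b := by ring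

theorem af_rate_high_snr_general (N : ℕ) (g h : ℝ) (hg : 0 < g) (hh : 0 < h)
    (hmax : 1 ≤ max g ((N : ℝ) * h)) :
    (1 / 2) * Real.logb 2 (1 + (1 / 3) * (N : ℝ) * min g ((N : ℝ) * h)) ≤
      (1 / 2) * Real.logb 2 (1 + (N : ℝ) ^ 2 * g * h / (1 + g + (N : ℝ) * h)) := by
  have hNh : 0 ≤ (N : ℝ) * h := by positivity
  have hsnr : (1 / 3) * (N : ℝ) * min g ((N : ℝ) * h) ≤
      (N : ℝ) ^ 2 * g * h / (1 + g + (N : ℝ) * h) :=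
    calc (1 / 3) * (N : ℝ) * min g ((N : ℝ) * h) = N * (min g ((N : ℝ) * h) / 3) := by ring
      _ ≤ N * (g * (N * h) / (1 + g + N * h)) := by
        gcongr N * ?_
        exact min_div_three_le_mul_div_one_add_add hg.le hNh hmax
      _ = (N : ℝ) ^ 2 * g * h / (1 + g + (N : ℝ) * h) := by ring
  have hpos : 0 < 1 + (1 / 3) * (N : ℝ) * min g ((N : ℝ) * h) := by
    have := le_min hg.le hNh
    positivity
  gcongr 1 / 2 * ?_
  exact Real.logb_le_logb_of_le one_lt_two hpos (by linarith)

theorem af_rate_high_snr (N : ℕ) (hN : 2 ≤ N) (g h : ℝ) (hg : 0 < g) (hh : 0 < h)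
    (hmax : 1 ≤ max g ((N : ℝ) * h)) :
    (1 / 2) * Real.logb 2 (1 + (1 / 3) * (N : ℝ) * min g ((N : ℝ) * h)) ≤
      (1 / 2) * Real.logb 2 (1 + (N : ℝ) ^ 2 * g * h / (1 + g + (N : ℝ) * h)) :=
  af_rate_high_snr_general N g h hg hh hmax
end

section
/- For every integer N ≥ 2 and reals g, h > 0 with max{g, N·h} < 1 and g ≤ h, setting δ = N·g one has δ ≤ 1 and (1/2)·δ·log(1 + (N²gh/δ²)/(1 + g/δ + N·h/δ)) ≥ (1/2)·ln(4/3)·log(1 + N·g). -/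
/-! With duty cycle `δ = N g` the effective SNR of bursty amplify-and-forward collapses to
`(h/g) / (1 + 1/N + h/g)`, which is at least `1/3` because `h ≥ g`. Hence the rate is at least
`(δ/2) log (4/3)`, and `ln (1 + δ) ≤ δ` turns this into the claimed bound. -/

open Real

lemma one_third_le_div_one_add_add {c t : ℝ} (hc₀ : 0 ≤ c) (hc₁ : c ≤ 1) (ht : 1 ≤ t) :
    1 / 3 ≤ t / (1 + c + t) := by
  rw [div_le_div_iff₀ (by norm_num) (by linarith)]
  linarith

lemma bursty_af_snr_eq {N g h : ℝ} (hN : N ≠ 0) (hg : g ≠ 0) :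
    (N ^ 2 * g * h / (N * g) ^ 2) / (1 + g / (N * g) + N * h / (N * g)) =
      (h / g) / (1 + 1 / N + h / g) := by
  field_simp

lemma one_third_le_bursty_af_snr {N g h : ℝ} (hN : 1 ≤ N) (hg : 0 < g) (hgh : g ≤ h) :
    1 / 3 ≤ (N ^ 2 * g * h / (N * g) ^ 2) / (1 + g / (N * g) + N * h / (N * g)) := by
  rw [bursty_af_snr_eq (by positivity) hg.ne']
  exact one_third_le_div_one_add_add (by positivity) (div_le_one_of_le₀ hN (by positivity))
    ((one_le_div hg).2 hgh)

lemma log_mul_logb_one_add_le {b x y : ℝ} (hb : 1 < b) (hx : 0 ≤ x) (hy : 1 ≤ y) :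
    log y * logb b (1 + x) ≤ x * logb b y := by
  have hln : log (1 + x) ≤ x := by linarith [log_le_sub_one_of_pos (by linarith : 0 < 1 + x)]
  simp only [logb, ← mul_div_assoc]
  refine div_le_div_of_nonneg_right ?_ (log_nonneg hb.le)
  calc log y * log (1 + x) ≤ log y * x := by gcongr; exact log_nonneg hy
    _ = x * log y := mul_comm _ _

theorem bursty_af_rate_weak_broadcast_general (N : ℕ) (hN : 2 ≤ N) (g h : ℝ)
    (hg : 0 < g) (hmax : max g ((N : ℝ) * h) < 1) (hgh : g ≤ h) :
    (N : ℝ) * g ≤ 1 ∧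
    (1 / 2) * Real.log (4 / 3) * Real.logb 2 (1 + (N : ℝ) * g) ≤
      (1 / 2) * ((N : ℝ) * g) *
        Real.logb 2 (1 + ((N : ℝ) ^ 2 * g * h / ((N : ℝ) * g) ^ 2) /
          (1 + g / ((N : ℝ) * g) + (N : ℝ) * h / ((N : ℝ) * g))) := by
  have hN1 : (1 : ℝ) ≤ N := by exact_mod_cast one_le_two.trans hN
  have hδ : 0 ≤ (N : ℝ) * g := by positivity
  have hδ_le : (N : ℝ) * g ≤ 1 :=
    (mul_le_mul_of_nonneg_left hgh (by positivity)).trans (max_lt_iff.1 hmax).2.le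
  refine ⟨hδ_le, ?_⟩
  set snr := ((N : ℝ) ^ 2 * g * h / ((N : ℝ) * g) ^ 2) /
    (1 + g / ((N : ℝ) * g) + (N : ℝ) * h / ((N : ℝ) * g))
  have hsnr : 1 / 3 ≤ snr := one_third_le_bursty_af_snr hN1 hg hgh
  calc (1 / 2) * log (4 / 3) * logb 2 (1 + N * g)
      = (1 / 2) * (log (4 / 3) * logb 2 (1 + N * g)) := by ring
    _ ≤ (1 / 2) * (N * g * logb 2 (4 / 3)) := by
        have := log_mul_logb_one_add_le (y := 4 / 3) one_lt_two hδ (by norm_num)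
        gcongr
    _ ≤ (1 / 2) * (N * g) * logb 2 (1 + snr) := by
        rw [← mul_assoc]
        gcongr ?_ * logb 2 ?_
        · norm_num
        · linarith

theorem bursty_af_rate_weak_broadcast (N : ℕ) (hN : 2 ≤ N) (g h : ℝ)
    (hg : 0 < g) (hh : 0 < h) (hmax : max g ((N : ℝ) * h) < 1) (hgh : g ≤ h) :
    (N : ℝ) * g ≤ 1 ∧
    (1 / 2) * Real.log (4 / 3) * Real.logb 2 (1 + (N : ℝ) * g) ≤
      (1 / 2) * ((N : ℝ) * g) *
        Real.logb 2 (1 + ((N : ℝ) ^ 2 * g * h / ((N : ℝ) * g) ^ 2) /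
          (1 + g / ((N : ℝ) * g) + (N : ℝ) * h / ((N : ℝ) * g))) :=
  bursty_af_rate_weak_broadcast_general N hN g h hg hmax hgh
end

section
/- Let N ≥ 2 and ρ ∈ (−1/(N−1), 0). For every integer n with 0 ≤ n ≤ N, the function ρ ↦ n·(1 + (n−1)·ρ − n·(N−n)·ρ²/(1 + (N−n−1)·ρ)) has nonnegative derivative: d/dρ of this expression equals n·((n−1) − n(N−n)·ρ·(2+(N−n−1)ρ)/(1+(N−n−1)ρ)²), which is nonnegative for ρ ∈ (−1/(N−1), 0). -/
/-! The derivative is the quotient rule. For its sign: since `ρ < 0` and `N - n - 1 ≤ N - 1`,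
`(N-n-1)ρ ≥ (N-1)ρ > -1`, so the denominator `1 + (N-n-1)ρ` is positive. Hence the subtracted term
`n(N-n)ρ(2+(N-n-1)ρ)/(…)²` is nonpositive, while `n - 1 ≥ 0` unless `n = 0`, where the whole
expression vanishes. -/

open Set

theorem one_add_mul_pos_of_mem_Ioo {c m ρ : ℝ} (hρ : ρ ∈ Ioo (-(1 / m)) 0) (hc : c ≤ m) :
    0 < 1 + c * ρ := by
  obtain ⟨hlo, hhi⟩ := hρ
  have hm : 0 < m := one_div_pos.mp (by linarith)
  have hmρ : -1 < m * ρ := by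
    have := mul_lt_mul_of_pos_left hlo hm
    rwa [mul_neg, mul_one_div_cancel hm.ne'] at this
  nlinarith

theorem hasDerivAt_sq_div_one_add_mul {d ρ : ℝ} (h : 1 + d * ρ ≠ 0) :
    HasDerivAt (fun r : ℝ => r ^ 2 / (1 + d * r)) (ρ * (2 + d * ρ) / (1 + d * ρ) ^ 2) ρ := by
  have hnum : HasDerivAt (fun r : ℝ => r ^ 2) (2 * ρ) ρ := by simpa using hasDerivAt_pow 2 ρ
  have hden : HasDerivAt (fun r : ℝ => 1 + d * r) d ρ := by
    simpa using ((hasDerivAt_id ρ).const_mul d).const_add 1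
  refine (hnum.div hden h).congr_deriv ?_
  field_simp
  ring

theorem hasDerivAt_cutsetMultiplier {a b ρ : ℝ} (h : 1 + (b - 1) * ρ ≠ 0) :
    HasDerivAt (fun r : ℝ => a * (1 + (a - 1) * r - a * b * r ^ 2 / (1 + (b - 1) * r)))
      (a * ((a - 1) - a * b * ρ * (2 + (b - 1) * ρ) / (1 + (b - 1) * ρ) ^ 2)) ρ := by
  have hlin : HasDerivAt (fun r : ℝ => 1 + (a - 1) * r) (a - 1) ρ := by
    simpa using ((hasDerivAt_id ρ).const_mul (a - 1)).const_add 1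
  have hquot := (hasDerivAt_sq_div_one_add_mul h).const_mul (a * b)
  refine ((hlin.sub hquot).const_mul a).congr_deriv (by ring) |>.congr_of_eventuallyEq
    (.of_forall fun r => ?_)
  simp only [Pi.sub_apply]
  ring

theorem cutsetMultiplier_deriv_nonneg (n : ℕ) {b ρ : ℝ} (hb : 0 ≤ b) (hρ : ρ ≤ 0)
    (hpos : 0 ≤ 2 + (b - 1) * ρ) :
    0 ≤ (n : ℝ) * ((n - 1) - n * b * ρ * (2 + (b - 1) * ρ) / (1 + (b - 1) * ρ) ^ 2) := by
  rcases Nat.eq_zero_or_pos n with rfl | hn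
  · simp
  have hn1 : (1 : ℝ) ≤ n := by exact_mod_cast hn
  have hnum : n * b * ρ * (2 + (b - 1) * ρ) ≤ 0 :=
    mul_nonpos_of_nonpos_of_nonneg
      (mul_nonpos_of_nonneg_of_nonpos (by positivity) hρ) hpos
  have hfrac := div_nonpos_of_nonpos_of_nonneg hnum (sq_nonneg (1 + (b - 1) * ρ))
  exact mul_nonneg (Nat.cast_nonneg n) (by linarith)

theorem cutset_multiplier_monotone_general (N n : ℕ) (hn : n ≤ N)
    (ρ : ℝ) (hρ : ρ ∈ Set.Ioo (-(1 / ((N : ℝ) - 1))) 0) :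
    HasDerivAt
      (fun r : ℝ => (n : ℝ) * (1 + ((n : ℝ) - 1) * r -
        (n : ℝ) * ((N : ℝ) - n) * r ^ 2 / (1 + ((N : ℝ) - n - 1) * r)))
      ((n : ℝ) * (((n : ℝ) - 1) -
        (n : ℝ) * ((N : ℝ) - n) * ρ * (2 + ((N : ℝ) - n - 1) * ρ) /
          (1 + ((N : ℝ) - n - 1) * ρ) ^ 2)) ρ ∧
    0 ≤ (n : ℝ) * (((n : ℝ) - 1) -
        (n : ℝ) * ((N : ℝ) - n) * ρ * (2 + ((N : ℝ) - n - 1) * ρ) /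
          (1 + ((N : ℝ) - n - 1) * ρ) ^ 2) := by
  have hb : (0 : ℝ) ≤ N - n := sub_nonneg.mpr (by exact_mod_cast hn)
  have hden : 0 < 1 + ((N : ℝ) - n - 1) * ρ :=
    one_add_mul_pos_of_mem_Ioo hρ (by linarith [Nat.cast_nonneg (α := ℝ) n])
  exact ⟨hasDerivAt_cutsetMultiplier hden.ne',
    cutsetMultiplier_deriv_nonneg n hb hρ.2.le (by linarith)⟩

theorem cutset_multiplier_monotone (N n : ℕ) (hN : 2 ≤ N) (hn : n ≤ N)
    (ρ : ℝ) (hρ : ρ ∈ Set.Ioo (-(1 / ((N : ℝ) - 1))) 0) :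
    HasDerivAt
      (fun r : ℝ => (n : ℝ) * (1 + ((n : ℝ) - 1) * r -
        (n : ℝ) * ((N : ℝ) - n) * r ^ 2 / (1 + ((N : ℝ) - n - 1) * r)))
      ((n : ℝ) * (((n : ℝ) - 1) -
        (n : ℝ) * ((N : ℝ) - n) * ρ * (2 + ((N : ℝ) - n - 1) * ρ) /
          (1 + ((N : ℝ) - n - 1) * ρ) ^ 2)) ρ ∧
    0 ≤ (n : ℝ) * (((n : ℝ) - 1) -
        (n : ℝ) * ((N : ℝ) - n) * ρ * (2 + ((N : ℝ) - n - 1) * ρ) /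
          (1 + ((N : ℝ) - n - 1) * ρ) ^ 2) :=
  cutset_multiplier_monotone_general N n hn ρ hρ
end

section
/- Let N ≥ 2, ρ ∈ (−1/(N−1), 1), and let Q^ρ be the N×N matrix with 1 on the diagonal and ρ off the diagonal. For any integer n with 1 ≤ n ≤ N−1, with S = {1,…,n} and the Schur complement Q_{S|S^c} = Q_{S,S} − Q_{S,S^c}(Q_{S^c,S^c})^{-1} Q_{S^c,S}, one has 𝟙ᵀ Q_{S|S^c} 𝟙 = n·(1 + (n−1)ρ − n(N−n)ρ²/(1 + (N−n−1)ρ)), where 𝟙 is the all-ones vector of length n. -/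
/-!
Write `Q` for the equicorrelation matrix `(1 - ρ) I + ρ J`. Its off-diagonal blocks are constant,
so the total sum of `Q₁₂ Q₂₂⁻¹ Q₂₁` is `n² ρ²` times the total sum of `Q₂₂⁻¹`. The all-ones vector
is an eigenvector of the `m × m` equicorrelation matrix `Q₂₂` with eigenvalue `1 + (m - 1) ρ`, and
this eigenvalue is positive on the given range of `ρ`; hence `Q₂₂⁻¹ 𝟙 = 𝟙 / (1 + (m - 1) ρ)` and
the total sum of `Q₂₂⁻¹` is `m / (1 + (m - 1) ρ)`.
-/

open Matrix

namespace Matrix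

section CommRing

variable {ι κ K : Type*} [CommRing K]

def equicorrelation (ι : Type*) [DecidableEq ι] (ρ : K) : Matrix ι ι K :=
  of fun i j => if i = j then 1 else ρ

section

variable [DecidableEq ι] [DecidableEq κ] (ρ : K)

theorem equicorrelation_eq :
    equicorrelation ι ρ = (1 - ρ) • (1 : Matrix ι ι K) + of fun _ _ => ρ := by
  ext i j
  by_cases h : i = j <;> simp [equicorrelation, h]

@[simp]
theorem toBlocks₁₁_equicorrelation :
    (equicorrelation (ι ⊕ κ) ρ).toBlocks₁₁ = equicorrelation ι ρ := by
  ext; simp [equicorrelation, toBlocks₁₁]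

@[simp]
theorem toBlocks₁₂_equicorrelation :
    (equicorrelation (ι ⊕ κ) ρ).toBlocks₁₂ = of fun _ _ => ρ := by
  ext; simp [equicorrelation, toBlocks₁₂]

@[simp]
theorem toBlocks₂₁_equicorrelation :
    (equicorrelation (ι ⊕ κ) ρ).toBlocks₂₁ = of fun _ _ => ρ := by
  ext; simp [equicorrelation, toBlocks₂₁]

@[simp]
theorem toBlocks₂₂_equicorrelation :
    (equicorrelation (ι ⊕ κ) ρ).toBlocks₂₂ = equicorrelation κ ρ := by
  ext; simp [equicorrelation, toBlocks₂₂]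

end

variable [Fintype ι] [Fintype κ]

theorem sum_sum_eq_one_dotProduct_mulVec_one (A : Matrix ι κ K) :
    ∑ i, ∑ j, A i j = 1 ⬝ᵥ A *ᵥ 1 := by
  simp [mulVec, dotProduct]

theorem sum_sum_const_mul_mul_const {ι' ν : Type*} [Fintype ι'] [Fintype ν] (a b : K)
    (X : Matrix κ ν K) :
    ∑ i, ∑ j, ((of fun _ _ => a : Matrix ι κ K) * X * (of fun _ _ => b : Matrix ν ι' K)) i j =
      Fintype.card ι * Fintype.card ι' * a * b * ∑ k, ∑ l, X k l := by
  simp only [mul_apply, of_apply, ← Finset.mul_sum, ← Finset.sum_mul, Finset.sum_const,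
    Finset.card_univ, nsmul_eq_mul]
  rw [Finset.sum_comm]
  ring

variable [DecidableEq ι]

theorem equicorrelation_mulVec (ρ : K) (v : ι → K) :
    equicorrelation ι ρ *ᵥ v = (1 - ρ) • v + fun _ => ρ * ∑ i, v i := by
  rw [equicorrelation_eq, add_mulVec, smul_mulVec, one_mulVec]
  ext i
  simp [mulVec, dotProduct, Finset.mul_sum]

theorem equicorrelation_mulVec_one (ρ : K) :
    equicorrelation ι ρ *ᵥ 1 = (1 + (Fintype.card ι - 1) * ρ) • 1 := by
  ext i
  simp only [equicorrelation_mulVec, Pi.add_apply, Pi.smul_apply, Pi.one_apply, smul_eq_mul,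
    Finset.sum_const, Finset.card_univ, nsmul_eq_mul, mul_one]
  ring

theorem sum_sum_equicorrelation (ρ : K) :
    ∑ i, ∑ j, equicorrelation ι ρ i j = Fintype.card ι * (1 + (Fintype.card ι - 1) * ρ) := by
  rw [sum_sum_eq_one_dotProduct_mulVec_one, equicorrelation_mulVec_one, dotProduct_smul,
    one_dotProduct_one, smul_eq_mul, mul_comm]

end CommRing

section Field

variable {ι K : Type*} [Fintype ι] [DecidableEq ι] [Field K] {ρ : K}

theorem isUnit_equicorrelation (hρ : ρ ≠ 1) (hc : 1 + (Fintype.card ι - 1) * ρ ≠ 0) :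
    IsUnit (equicorrelation ι ρ) := by
  refine mulVec_injective_iff_isUnit.mp <|
    (injective_iff_map_eq_zero (mulVecLin _)).mpr fun v hv ↦ ?_
  have hv' : ∀ i, (1 - ρ) * v i + ρ * ∑ j, v j = 0 := fun i ↦ by
    simpa [equicorrelation_mulVec] using congr_fun hv i
  -- summing the coordinates of the equation shows that `v` sums to zero
  have hsum : ∑ j, v j = 0 := by
    have := Finset.sum_eq_zero (s := Finset.univ) fun i _ ↦ hv' i
    rw [Finset.sum_add_distrib, ← Finset.mul_sum, Finset.sum_const, Finset.card_univ,
      nsmul_eq_mul] at this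
    exact (mul_eq_zero.mp (by linear_combination this)).resolve_left hc
  ext i
  simpa [hsum, sub_ne_zero.mpr hρ.symm] using hv' i

theorem sum_sum_inv_equicorrelation (hρ : ρ ≠ 1) (hc : 1 + (Fintype.card ι - 1) * ρ ≠ 0) :
    ∑ i, ∑ j, (equicorrelation ι ρ)⁻¹ i j = Fintype.card ι / (1 + (Fintype.card ι - 1) * ρ) := by
  have hu := (isUnit_iff_isUnit_det _).mp (isUnit_equicorrelation hρ hc)
  have h : (equicorrelation ι ρ)⁻¹ *ᵥ 1 = (1 + (Fintype.card ι - 1) * ρ)⁻¹ • 1 := by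
    rw [← inv_smul_smul₀ hc ((equicorrelation ι ρ)⁻¹ *ᵥ 1), ← mulVec_smul,
      ← equicorrelation_mulVec_one, mulVec_mulVec, nonsing_inv_mul _ hu, one_mulVec]
  rw [sum_sum_eq_one_dotProduct_mulVec_one, h, dotProduct_smul, one_dotProduct_one, smul_eq_mul,
    div_eq_inv_mul]

end Field

end Matrix

theorem one_add_sub_one_mul_pos_of_mem_Ioo {k N ρ : ℝ} (hk₀ : 0 ≤ k) (hkN : k ≤ N)
    (hρ : ρ ∈ Set.Ioo (-(1 / (N - 1))) 1) : 0 < 1 + (k - 1) * ρ := by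
  obtain ⟨hlo, hhi⟩ := hρ
  rcases le_or_gt 0 ρ with hρ₀ | hρ₀
  · nlinarith
  rcases le_or_gt N 1 with hN | hN
  · nlinarith
  have : -ρ * (N - 1) < 1 := (lt_div_iff₀ (by linarith)).mp (neg_lt.mp hlo)
  nlinarith

theorem schur_complement_quadratic_form_general (n m : ℕ)
    (ρ : ℝ) (hρ : ρ ∈ Set.Ioo (-(1 / (((n : ℝ) + m) - 1))) 1)
    (Q : Matrix (Fin n ⊕ Fin m) (Fin n ⊕ Fin m) ℝ)
    (hQ : Q = Matrix.of fun i j => if i = j then (1 : ℝ) else ρ) :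
    ∑ i : Fin n, ∑ j : Fin n,
        (Q.toBlocks₁₁ - Q.toBlocks₁₂ * (Q.toBlocks₂₂)⁻¹ * Q.toBlocks₂₁) i j =
      (n : ℝ) * (1 + ((n : ℝ) - 1) * ρ -
        (n : ℝ) * (m : ℝ) * ρ ^ 2 / (1 + ((m : ℝ) - 1) * ρ)) := by
  obtain rfl : Q = equicorrelation (Fin n ⊕ Fin m) ρ := hQ
  have hc : 0 < 1 + ((m : ℝ) - 1) * ρ :=
    one_add_sub_one_mul_pos_of_mem_Ioo m.cast_nonneg (by simp) hρ
  simp only [toBlocks₁₁_equicorrelation, toBlocks₁₂_equicorrelation,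
    toBlocks₂₁_equicorrelation, toBlocks₂₂_equicorrelation, Matrix.sub_apply,
    Finset.sum_sub_distrib]
  rw [sum_sum_equicorrelation, sum_sum_const_mul_mul_const,
    sum_sum_inv_equicorrelation (by linarith [hρ.2]) (by simpa using hc.ne')]
  simp only [Fintype.card_fin]
  field_simp

theorem schur_complement_quadratic_form (n m : ℕ) (hn : 1 ≤ n) (hm : 1 ≤ m)
    (ρ : ℝ) (hρ : ρ ∈ Set.Ioo (-(1 / (((n : ℝ) + m) - 1))) 1)
    (Q : Matrix (Fin n ⊕ Fin m) (Fin n ⊕ Fin m) ℝ)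
    (hQ : Q = Matrix.of fun i j => if i = j then (1 : ℝ) else ρ) :
    ∑ i : Fin n, ∑ j : Fin n,
        (Q.toBlocks₁₁ - Q.toBlocks₁₂ * (Q.toBlocks₂₂)⁻¹ * Q.toBlocks₂₁) i j =
      (n : ℝ) * (1 + ((n : ℝ) - 1) * ρ -
        (n : ℝ) * (m : ℝ) * ρ ^ 2 / (1 + ((m : ℝ) - 1) * ρ)) :=
  schur_complement_quadratic_form_general n m ρ hρ Q hQ
end

section
/- Let λ₁ ∈ [0,1], λ₂ = 1−λ₁, and let Q¹, Q² be real positive semidefinite N×N matrices with Schur complements (with respect to a fixed index subset S^c, using Moore–Penrose generalized inverses) Q¹_{S|S^c} and Q²_{S|S^c}. If Q = λ₁Q¹ + λ₂Q², then for the all-ones vector 𝟙 and any h ≥ 0: (1/2)·log(1 + h·𝟙ᵀ Q_{S|S^c} 𝟙) ≥ λ₁·(1/2)·log(1 + h·𝟙ᵀ Q¹_{S|S^c} 𝟙) + λ₂·(1/2)·log(1 + h·𝟙ᵀ Q²_{S|S^c} 𝟙). -/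
open Matrix

/-- `B` is a Moore–Penrose generalized inverse of `A`. -/
def IsMoorePenroseInv {k : Type*} [Fintype k] [DecidableEq k]
    (A B : Matrix k k ℝ) : Prop :=
  A * B * A = A ∧ B * A * B = B ∧ (A * B)ᵀ = A * B ∧ (B * A)ᵀ = B * A

/-- Generalized Schur complement of the lower-right block, with respect to a
given generalized inverse `B` of the lower-right block. -/
def genSchur {a b : ℕ} (Q : Matrix (Fin a ⊕ Fin b) (Fin a ⊕ Fin b) ℝ)
    (B : Matrix (Fin b) (Fin b) ℝ) : Matrix (Fin a) (Fin a) ℝ :=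
  Q.toBlocks₁₁ - Q.toBlocks₁₂ * B * Q.toBlocks₂₁

/-!
Write a positive semidefinite `Q` in blocks `A, C; Cᵀ, D`. Positivity gives `ker D ⊆ ker C`, so
`Cᵀ x ∈ (ker D)ᗮ = range D`, say `Cᵀ x = D w`. For any `B` with `D B D = D` this completes the
square: `(x, y)ᵀ Q (x, y) = xᵀ (A - C B Cᵀ) x + (y + w)ᵀ D (y + w)`. Thus `xᵀ Q_{S|Sᶜ} x` is the
minimum over `y` of a quadratic form that is linear in `Q`, hence concave in `Q`; composing with
the concave nondecreasing map `t ↦ log₂ (1 + h t)` on `[0, ∞)` and taking `x = 𝟙` gives the claim.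
-/

section SymmetricRange

variable {n : Type*} [Fintype n] {D : Matrix n n ℝ}

lemma Matrix.IsHermitian.exists_mulVec_eq_of_forall_ker_dotProduct_eq_zero [DecidableEq n]
    (hD : D.IsHermitian) {v : n → ℝ} (hv : ∀ u, D *ᵥ u = 0 → u ⬝ᵥ v = 0) :
    ∃ w, D *ᵥ w = v := by
  have hT := Matrix.isSymmetric_toEuclideanLin_iff.mpr hD
  have hmem : WithLp.toLp 2 v ∈ LinearMap.range (toEuclideanLin D) := by
    rw [← Submodule.orthogonal_orthogonal (LinearMap.range _), hT.orthogonal_range]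
    intro u hu
    simpa [EuclideanSpace.inner_eq_star_dotProduct, dotProduct_comm] using
      hv u.ofLp (by simpa using congrArg WithLp.ofLp hu)
  obtain ⟨w, hw⟩ := hmem
  exact ⟨w.ofLp, by simpa using congrArg WithLp.ofLp hw⟩

lemma Matrix.IsHermitian.dotProduct_mulVec_comm (hD : D.IsHermitian) (u v : n → ℝ) :
    u ⬝ᵥ D *ᵥ v = v ⬝ᵥ D *ᵥ u := by
  rw [dotProduct_mulVec, ← mulVec_transpose, ← conjTranspose_eq_transpose_of_trivial, hD,
    dotProduct_comm]

end SymmetricRange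

section Blocks

variable {m n : Type*} {Q : Matrix (m ⊕ n) (m ⊕ n) ℝ}

lemma Matrix.PosSemidef.toBlocks₂₁_eq_transpose (hQ : Q.PosSemidef) :
    Q.toBlocks₂₁ = Q.toBlocks₁₂ᵀ := by
  ext i j
  simpa [toBlocks₂₁, toBlocks₁₂] using (congrFun₂ hQ.isHermitian (Sum.inr i) (Sum.inl j)).symm

lemma Matrix.PosSemidef.toBlocks₂₂ (hQ : Q.PosSemidef) : Q.toBlocks₂₂.PosSemidef :=
  hQ.submatrix Sum.inr

variable [Fintype m] [Fintype n]

lemma Matrix.sumElim_dotProduct_mulVec_sumElim (x : m → ℝ) (y : n → ℝ) :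
    Sum.elim x y ⬝ᵥ Q *ᵥ Sum.elim x y = x ⬝ᵥ Q.toBlocks₁₁ *ᵥ x + x ⬝ᵥ Q.toBlocks₁₂ *ᵥ y
      + (y ⬝ᵥ Q.toBlocks₂₁ *ᵥ x + y ⬝ᵥ Q.toBlocks₂₂ *ᵥ y) := by
  conv_lhs => rw [← Q.fromBlocks_toBlocks]
  rw [fromBlocks_mulVec, sumElim_dotProduct_sumElim, dotProduct_add, dotProduct_add,
    Sum.elim_comp_inl, Sum.elim_comp_inr]

lemma Matrix.PosSemidef.toBlocks₁₂_mulVec_eq_zero (hQ : Q.PosSemidef) {u : n → ℝ}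
    (hu : Q.toBlocks₂₂ *ᵥ u = 0) : Q.toBlocks₁₂ *ᵥ u = 0 := by
  have hzero : Q *ᵥ Sum.elim 0 u = 0 := by
    rw [← hQ.dotProduct_mulVec_zero_iff, star_trivial, sumElim_dotProduct_mulVec_sumElim, hu]
    simp
  funext i
  have := congrFun hzero (Sum.inl i)
  rw [← Q.fromBlocks_toBlocks, fromBlocks_mulVec] at this
  simpa using this

lemma Matrix.PosSemidef.exists_toBlocks₂₂_mulVec_eq [DecidableEq n] (hQ : Q.PosSemidef)
    (x : m → ℝ) :
    ∃ w, Q.toBlocks₂₂ *ᵥ w = Q.toBlocks₂₁ *ᵥ x := by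
  refine hQ.toBlocks₂₂.isHermitian.exists_mulVec_eq_of_forall_ker_dotProduct_eq_zero
    fun u hu => ?_
  rw [hQ.toBlocks₂₁_eq_transpose, dotProduct_mulVec, vecMul_transpose,
    hQ.toBlocks₁₂_mulVec_eq_zero hu, zero_dotProduct]

end Blocks

section GenSchur

variable {a b : ℕ} {Q : Matrix (Fin a ⊕ Fin b) (Fin a ⊕ Fin b) ℝ} {B : Matrix (Fin b) (Fin b) ℝ}

lemma sumElim_dotProduct_mulVec_sumElim_eq_genSchur (hQ : Q.PosSemidef)
    (hB : Q.toBlocks₂₂ * B * Q.toBlocks₂₂ = Q.toBlocks₂₂) {x : Fin a → ℝ} {w : Fin b → ℝ}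
    (hw : Q.toBlocks₂₂ *ᵥ w = Q.toBlocks₂₁ *ᵥ x) (y : Fin b → ℝ) :
    Sum.elim x y ⬝ᵥ Q *ᵥ Sum.elim x y
      = x ⬝ᵥ genSchur Q B *ᵥ x + (y + w) ⬝ᵥ Q.toBlocks₂₂ *ᵥ (y + w) := by
  set D := Q.toBlocks₂₂
  have hD := hQ.toBlocks₂₂.isHermitian
  have hC : Q.toBlocks₁₂ᵀ *ᵥ x = D *ᵥ w := by rw [← hQ.toBlocks₂₁_eq_transpose, hw]
  have hcross : x ⬝ᵥ Q.toBlocks₁₂ *ᵥ y = w ⬝ᵥ D *ᵥ y := by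
    rw [dotProduct_mulVec, ← mulVec_transpose, hC, dotProduct_comm, hD.dotProduct_mulVec_comm]
  have hcorrection : x ⬝ᵥ (Q.toBlocks₁₂ * B * Q.toBlocks₂₁) *ᵥ x = w ⬝ᵥ D *ᵥ w := by
    rw [← mulVec_mulVec, ← mulVec_mulVec, ← hw, dotProduct_mulVec, ← mulVec_transpose, hC,
      dotProduct_comm, hD.dotProduct_mulVec_comm, mulVec_mulVec, mulVec_mulVec, hB]
  rw [sumElim_dotProduct_mulVec_sumElim, genSchur, sub_mulVec, dotProduct_sub, hcorrection,
    hcross, ← hw, mulVec_add, add_dotProduct, dotProduct_add, dotProduct_add,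
    hD.dotProduct_mulVec_comm w y]
  ring

lemma isLeast_dotProduct_genSchur_mulVec (hQ : Q.PosSemidef)
    (hB : Q.toBlocks₂₂ * B * Q.toBlocks₂₂ = Q.toBlocks₂₂) (x : Fin a → ℝ) :
    IsLeast (Set.range fun y => Sum.elim x y ⬝ᵥ Q *ᵥ Sum.elim x y)
      (x ⬝ᵥ genSchur Q B *ᵥ x) := by
  obtain ⟨w, hw⟩ := hQ.exists_toBlocks₂₂_mulVec_eq x
  refine ⟨⟨-w, by simp [sumElim_dotProduct_mulVec_sumElim_eq_genSchur hQ hB hw]⟩, ?_⟩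
  rintro _ ⟨y, rfl⟩
  dsimp only
  rw [sumElim_dotProduct_mulVec_sumElim_eq_genSchur hQ hB hw]
  simpa using hQ.toBlocks₂₂.dotProduct_mulVec_nonneg (y + w)

lemma dotProduct_genSchur_mulVec_nonneg (hQ : Q.PosSemidef)
    (hB : Q.toBlocks₂₂ * B * Q.toBlocks₂₂ = Q.toBlocks₂₂) (x : Fin a → ℝ) :
    0 ≤ x ⬝ᵥ genSchur Q B *ᵥ x := by
  obtain ⟨y, hy⟩ := (isLeast_dotProduct_genSchur_mulVec hQ hB x).1
  simpa [← hy] using hQ.dotProduct_mulVec_nonneg (Sum.elim x y)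

lemma dotProduct_genSchur_mulVec_concave {Q₁ Q₂ : Matrix (Fin a ⊕ Fin b) (Fin a ⊕ Fin b) ℝ}
    (hQ₁ : Q₁.PosSemidef) (hQ₂ : Q₂.PosSemidef) {l₁ l₂ : ℝ} (hl₁ : 0 ≤ l₁) (hl₂ : 0 ≤ l₂)
    {B₁ B₂ : Matrix (Fin b) (Fin b) ℝ}
    (hB₁ : Q₁.toBlocks₂₂ * B₁ * Q₁.toBlocks₂₂ = Q₁.toBlocks₂₂)
    (hB₂ : Q₂.toBlocks₂₂ * B₂ * Q₂.toBlocks₂₂ = Q₂.toBlocks₂₂)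
    (hB : (l₁ • Q₁ + l₂ • Q₂).toBlocks₂₂ * B * (l₁ • Q₁ + l₂ • Q₂).toBlocks₂₂
      = (l₁ • Q₁ + l₂ • Q₂).toBlocks₂₂) (x : Fin a → ℝ) :
    l₁ * (x ⬝ᵥ genSchur Q₁ B₁ *ᵥ x) + l₂ * (x ⬝ᵥ genSchur Q₂ B₂ *ᵥ x)
      ≤ x ⬝ᵥ genSchur (l₁ • Q₁ + l₂ • Q₂) B *ᵥ x := by
  have hQ := (hQ₁.smul hl₁).add (hQ₂.smul hl₂)
  obtain ⟨y, hy⟩ := (isLeast_dotProduct_genSchur_mulVec hQ hB x).1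
  rw [← hy]
  simp only [add_mulVec, smul_mulVec, dotProduct_add, dotProduct_smul, smul_eq_mul]
  gcongr
  · exact (isLeast_dotProduct_genSchur_mulVec hQ₁ hB₁ x).2 ⟨y, rfl⟩
  · exact (isLeast_dotProduct_genSchur_mulVec hQ₂ hB₂ x).2 ⟨y, rfl⟩

end GenSchur

lemma concaveOn_logb_one_add_mul {h : ℝ} (hh : 0 ≤ h) :
    ConcaveOn ℝ (Set.Ici 0) fun t => Real.logb 2 (1 + h * t) := by
  have hlog : ConcaveOn ℝ (Set.Ici 0) fun t => Real.log (1 + h * t) := by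
    have hpos (t : ℝ) (ht : t ∈ Set.Ici 0) : 1 + h * t ∈ Set.Ioi 0 :=
      Set.mem_Ioi.2 (by have : 0 ≤ t := ht; positivity)
    refine ⟨convex_Ici 0, fun x hx y hy α β hα hβ hαβ => ?_⟩
    convert strictConcaveOn_log_Ioi.concaveOn.2 (hpos x hx) (hpos y hy) hα hβ hαβ using 2
    simp only [smul_eq_mul]
    linear_combination -hαβ
  simpa [Real.logb, div_eq_inv_mul] using hlog.smul (inv_nonneg.2 (Real.log_nonneg one_le_two))

lemma monotoneOn_logb_one_add_mul {h : ℝ} (hh : 0 ≤ h) :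
    MonotoneOn (fun t => Real.logb 2 (1 + h * t)) (Set.Ici 0) := fun x hx _ _ hxy => by
  have : 0 ≤ x := hx
  exact Real.logb_le_logb_of_le one_lt_two (by positivity) (by gcongr)

theorem schur_cut_value_concave {a b : ℕ}
    (Q₁ Q₂ : Matrix (Fin a ⊕ Fin b) (Fin a ⊕ Fin b) ℝ)
    (hQ₁ : Q₁.PosSemidef) (hQ₂ : Q₂.PosSemidef)
    (l₁ l₂ : ℝ) (hl₁ : l₁ ∈ Set.Icc (0 : ℝ) 1) (hl₂ : l₂ = 1 - l₁)
    (Q : Matrix (Fin a ⊕ Fin b) (Fin a ⊕ Fin b) ℝ) (hQ : Q = l₁ • Q₁ + l₂ • Q₂)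
    (B₁ B₂ B : Matrix (Fin b) (Fin b) ℝ)
    (hB₁ : IsMoorePenroseInv Q₁.toBlocks₂₂ B₁)
    (hB₂ : IsMoorePenroseInv Q₂.toBlocks₂₂ B₂)
    (hB : IsMoorePenroseInv Q.toBlocks₂₂ B)
    (h : ℝ) (hh : 0 ≤ h) :
    l₁ * ((1 / 2) * Real.logb 2 (1 + h * ∑ i : Fin a, ∑ j : Fin a, genSchur Q₁ B₁ i j)) +
      l₂ * ((1 / 2) * Real.logb 2 (1 + h * ∑ i : Fin a, ∑ j : Fin a, genSchur Q₂ B₂ i j)) ≤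
    (1 / 2) * Real.logb 2 (1 + h * ∑ i : Fin a, ∑ j : Fin a, genSchur Q B i j) := by
  obtain ⟨hl₁0, hl₁1⟩ := hl₁
  have hl₂0 : 0 ≤ l₂ := by linarith
  subst hQ
  have hsum (S : Matrix (Fin a) (Fin a) ℝ) : ∑ i, ∑ j, S i j = 1 ⬝ᵥ S *ᵥ 1 := by
    simp [mulVec, dotProduct]
  simp only [hsum]
  set s₁ := (1 : Fin a → ℝ) ⬝ᵥ genSchur Q₁ B₁ *ᵥ 1
  set s₂ := (1 : Fin a → ℝ) ⬝ᵥ genSchur Q₂ B₂ *ᵥ 1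
  set s := (1 : Fin a → ℝ) ⬝ᵥ genSchur (l₁ • Q₁ + l₂ • Q₂) B *ᵥ 1
  have hs₁ : 0 ≤ s₁ := dotProduct_genSchur_mulVec_nonneg hQ₁ hB₁.1 1
  have hs₂ : 0 ≤ s₂ := dotProduct_genSchur_mulVec_nonneg hQ₂ hB₂.1 1
  have hmix : l₁ * s₁ + l₂ * s₂ ≤ s :=
    dotProduct_genSchur_mulVec_concave hQ₁ hQ₂ hl₁0 hl₂0 hB₁.1 hB₂.1 hB.1 1
  have hconcave : l₁ * Real.logb 2 (1 + h * s₁) + l₂ * Real.logb 2 (1 + h * s₂)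
      ≤ Real.logb 2 (1 + h * (l₁ * s₁ + l₂ * s₂)) := by
    simpa using (concaveOn_logb_one_add_mul hh).2 hs₁ hs₂ hl₁0 hl₂0 (by linarith)
  have hmono : Real.logb 2 (1 + h * (l₁ * s₁ + l₂ * s₂)) ≤ Real.logb 2 (1 + h * s) := by
    have hmix₀ : 0 ≤ l₁ * s₁ + l₂ * s₂ := by positivity
    exact monotoneOn_logb_one_add_mul hh hmix₀ (hmix₀.trans hmix) hmix
  linarith
end

section
/- For every integer N ≥ 2 and reals g, h > 0 with h < g < N²·h and N·√(gh) ≥ 1 and N·h ≤ 1, setting n = N − ⌈N²h⌉ one has 0 ≤ n ≤ N−1 and (1/2)·log(1 + ⌈N²h⌉·g) + (1/2)·log(1 + N²h/⌈N²h⌉) ≤ (1/2)·log(1 + 2N²gh) + 1/2. -/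
/-!
Write `x = N²h` and `c = ⌈x⌉`. Squaring `N√(gh) ≥ 1` and using `g < x` gives `x² > N²gh ≥ 1`, so
`x > 1`; hence `c < x + 1 < 2x`, which bounds the first term by `(1/2)log(1 + 2N²gh)`, while
`x/c ≤ 1` bounds the second by `(1/2)log 2 = 1/2`. Finally `Nh ≤ 1` gives `x ≤ N`, so `1 ≤ c ≤ N`.
-/

open Real

lemma one_le_sq_mul_of_one_le_mul_sqrt {a x : ℝ} (ha : 0 ≤ a) (h : 1 ≤ a * √x) :
    1 ≤ a ^ 2 * x := by
  rw [← Real.sqrt_sq ha, ← Real.sqrt_mul (sq_nonneg a)] at h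
  exact Real.one_le_sqrt.mp h

lemma one_lt_of_lt_of_one_le_mul {g y : ℝ} (hg : 0 < g) (hgy : g < y) (h : 1 ≤ g * y) :
    1 < y := by
  nlinarith

lemma ceil_mul_le_two_mul_mul {x g : ℝ} (hx : 1 ≤ x) (hg : 0 ≤ g) :
    (⌈x⌉ : ℝ) * g ≤ 2 * x * g := by
  have hc : (⌈x⌉ : ℝ) ≤ 2 * x := by linarith [Int.ceil_lt_add_one x]
  exact mul_le_mul_of_nonneg_right hc hg

lemma div_ceil_le_one {x : ℝ} (hx : 0 ≤ x) : x / ⌈x⌉ ≤ 1 :=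
  div_le_one_of_le₀ (Int.le_ceil x) (by exact_mod_cast Int.ceil_nonneg hx)

lemma logb_two_one_add_le_one {t : ℝ} (ht₀ : -1 < t) (ht₁ : t ≤ 1) : logb 2 (1 + t) ≤ 1 :=
  calc logb 2 (1 + t) ≤ logb 2 2 := logb_le_logb_of_le one_lt_two (by linarith) (by linarith)
    _ = 1 := logb_self_eq_one one_lt_two

theorem cutset_instantiation_coherent_general (N : ℕ) (g h : ℝ)
    (hg : 0 < g) (h2 : g < (N : ℝ) ^ 2 * h)
    (h3 : 1 ≤ (N : ℝ) * Real.sqrt (g * h)) (h4 : (N : ℝ) * h ≤ 1) :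
    0 ≤ (N : ℤ) - ⌈(N : ℝ) ^ 2 * h⌉ ∧
    (N : ℤ) - ⌈(N : ℝ) ^ 2 * h⌉ ≤ (N : ℤ) - 1 ∧
    (1 / 2) * Real.logb 2 (1 + (⌈(N : ℝ) ^ 2 * h⌉ : ℝ) * g) +
        (1 / 2) * Real.logb 2 (1 + (N : ℝ) ^ 2 * h / (⌈(N : ℝ) ^ 2 * h⌉ : ℝ)) ≤
      (1 / 2) * Real.logb 2 (1 + 2 * (N : ℝ) ^ 2 * g * h) + 1 / 2 := by
  set x : ℝ := (N : ℝ) ^ 2 * h with hx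
  have hgx : 1 ≤ g * x := by
    have := one_le_sq_mul_of_one_le_mul_sqrt N.cast_nonneg h3
    linarith
  have hx_one : 1 < x := one_lt_of_lt_of_one_le_mul hg h2 hgx
  have hx_pos : 0 < x := zero_lt_one.trans hx_one
  have hx_le : x ≤ N :=
    calc x = N * (N * h) := by ring
      _ ≤ N * 1 := mul_le_mul_of_nonneg_left h4 N.cast_nonneg
      _ = N := mul_one _
  have hc_le : ⌈x⌉ ≤ N := Int.ceil_le.mpr (by exact_mod_cast hx_le)
  have hc_one : 1 ≤ ⌈x⌉ := Int.one_le_ceil_iff.mpr hx_pos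
  refine ⟨by omega, by omega, ?_⟩
  have hfirst : logb 2 (1 + ⌈x⌉ * g) ≤ logb 2 (1 + 2 * (N : ℝ) ^ 2 * g * h) := by
    refine logb_le_logb_of_le one_lt_two (by positivity) ?_
    linarith [ceil_mul_le_two_mul_mul hx_one.le hg.le]
  have hsecond : logb 2 (1 + x / ⌈x⌉) ≤ 1 := by
    have : 0 ≤ x / ⌈x⌉ := by positivity
    exact logb_two_one_add_le_one (by linarith) (div_ceil_le_one hx_pos.le)
  linarith

theorem cutset_instantiation_coherent (N : ℕ) (hN : 2 ≤ N) (g h : ℝ)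
    (hg : 0 < g) (hh : 0 < h) (h1 : h < g) (h2 : g < (N : ℝ) ^ 2 * h)
    (h3 : 1 ≤ (N : ℝ) * Real.sqrt (g * h)) (h4 : (N : ℝ) * h ≤ 1) :
    0 ≤ (N : ℤ) - ⌈(N : ℝ) ^ 2 * h⌉ ∧
    (N : ℤ) - ⌈(N : ℝ) ^ 2 * h⌉ ≤ (N : ℤ) - 1 ∧
    (1 / 2) * Real.logb 2 (1 + (⌈(N : ℝ) ^ 2 * h⌉ : ℝ) * g) +
        (1 / 2) * Real.logb 2 (1 + (N : ℝ) ^ 2 * h / (⌈(N : ℝ) ^ 2 * h⌉ : ℝ)) ≤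
      (1 / 2) * Real.logb 2 (1 + 2 * (N : ℝ) ^ 2 * g * h) + 1 / 2 :=
  cutset_instantiation_coherent_general N g h hg h2 h3 h4
end

section
/- For every integer N ≥ 2 and reals g, h > 0 with h ≤ g ≤ N²·h and N·√(gh) < 1, setting m = ⌈N·√(h/g)⌉ one has 1 ≤ m ≤ N and (1/2)·log(1 + m·g) + (1/2)·log(1 + N²h/m) ≤ log(1 + 2N·√(gh)). -/
/-!
With `x = N √(h/g)` and `c = N √(gh)` one has `x g = c` and `c x = N² h`. Since `m = ⌈x⌉ < x + 1`
and `g ≤ c` (squared, this is `g ≤ N² h`), `m g ≤ c + g ≤ 2c`; since `m ≥ x`, `N² h / m ≤ c`.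
Both capacities are therefore at most `log (1 + 2c)`, and so is their average.
-/

open Real

lemma Real.sqrt_div_mul_self_eq_sqrt_mul {g : ℝ} (hg : 0 ≤ g) (h : ℝ) :
    √(h / g) * g = √(g * h) := by
  rcases hg.eq_or_lt with rfl | hg
  · simp
  nth_rewrite 2 [← Real.sqrt_sq hg.le]
  rw [← Real.sqrt_mul' _ (sq_nonneg g)]
  congr 1
  field_simp

lemma Real.sqrt_mul_mul_sqrt_div {g h : ℝ} (hg : 0 < g) (hh : 0 ≤ h) :
    √(g * h) * √(h / g) = h := by
  rw [← Real.sqrt_mul (by positivity), show g * h * (h / g) = h ^ 2 by field_simp,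
    Real.sqrt_sq hh]

lemma le_mul_sqrt_mul_of_le_sq_mul {N g h : ℝ} (hN : 0 ≤ N) (hg : 0 ≤ g)
    (hgh : g ≤ N ^ 2 * h) : g ≤ N * √(g * h) := by
  rw [← Real.sqrt_sq hN, ← Real.sqrt_mul (sq_nonneg N), Real.le_sqrt hg] <;> nlinarith

lemma ceil_mul_le_two_mul_of_mul_eq {x g c : ℝ} (hg : 0 ≤ g) (hgc : g ≤ c) (hxg : x * g = c) :
    (⌈x⌉ : ℝ) * g ≤ 2 * c :=
  calc (⌈x⌉ : ℝ) * g ≤ (x + 1) * g := mul_le_mul_of_nonneg_right (Int.ceil_lt_add_one x).le hg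
    _ = c + g := by rw [add_mul, hxg, one_mul]
    _ ≤ 2 * c := by linarith

lemma Real.half_logb_add_half_logb_le {b x y z : ℝ} (hb : 1 < b) (hx : 0 < x) (hy : 0 < y)
    (hxz : x ≤ z) (hyz : y ≤ z) : 1 / 2 * logb b x + 1 / 2 * logb b y ≤ logb b z := by
  have hlx := logb_le_logb_of_le hb hx hxz
  have hly := logb_le_logb_of_le hb hy hyz
  linarith

theorem cutset_instantiation_noncoherent_general (N : ℕ) (g h : ℝ)
    (hg : 0 < g) (hh : 0 < h) (h1 : h ≤ g) (h2 : g ≤ (N : ℝ) ^ 2 * h) :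
    1 ≤ ⌈(N : ℝ) * Real.sqrt (h / g)⌉ ∧
    ⌈(N : ℝ) * Real.sqrt (h / g)⌉ ≤ (N : ℤ) ∧
    (1 / 2) * Real.logb 2 (1 + (⌈(N : ℝ) * Real.sqrt (h / g)⌉ : ℝ) * g) +
        (1 / 2) * Real.logb 2 (1 + (N : ℝ) ^ 2 * h / (⌈(N : ℝ) * Real.sqrt (h / g)⌉ : ℝ)) ≤
      Real.logb 2 (1 + 2 * (N : ℝ) * Real.sqrt (g * h)) := by
  set x := (N : ℝ) * √(h / g)
  set c := (N : ℝ) * √(g * h) with hc_def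
  have hxg : x * g = c := by rw [mul_assoc, Real.sqrt_div_mul_self_eq_sqrt_mul hg.le]
  have hcx : c * x = (N : ℝ) ^ 2 * h := by
    rw [show c * x = (N : ℝ) ^ 2 * (√(g * h) * √(h / g)) by ring,
      Real.sqrt_mul_mul_sqrt_div hg hh.le]
  have hgc : g ≤ c := le_mul_sqrt_mul_of_le_sq_mul N.cast_nonneg hg.le h2
  have hx_pos : 0 < x := pos_of_mul_pos_left (hxg ▸ hg.trans_le hgc) hg.le
  have hx_le : x ≤ N :=
    mul_le_of_le_one_right N.cast_nonneg (Real.sqrt_le_one.mpr ((div_le_one hg).mpr h1))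
  have hm_pos : (0 : ℝ) < ⌈x⌉ := by exact_mod_cast Int.ceil_pos.mpr hx_pos
  refine ⟨Int.one_le_ceil_iff.mpr hx_pos, Int.ceil_le.mpr (by exact_mod_cast hx_le), ?_⟩
  have hdiv : (N : ℝ) ^ 2 * h / ⌈x⌉ ≤ c :=
    calc (N : ℝ) ^ 2 * h / ⌈x⌉ ≤ (N : ℝ) ^ 2 * h / x :=
          div_le_div_of_nonneg_left (by positivity) hx_pos (Int.le_ceil x)
      _ = c := by rw [div_eq_iff hx_pos.ne', hcx]
  rw [mul_assoc 2, ← hc_def]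
  refine Real.half_logb_add_half_logb_le one_lt_two (by positivity) (by positivity) ?_ ?_
  · linarith [ceil_mul_le_two_mul_of_mul_eq hg.le hgc hxg]
  · linarith

theorem cutset_instantiation_noncoherent (N : ℕ) (hN : 2 ≤ N) (g h : ℝ)
    (hg : 0 < g) (hh : 0 < h) (h1 : h ≤ g) (h2 : g ≤ (N : ℝ) ^ 2 * h)
    (h3 : (N : ℝ) * Real.sqrt (g * h) < 1) :
    1 ≤ ⌈(N : ℝ) * Real.sqrt (h / g)⌉ ∧
    ⌈(N : ℝ) * Real.sqrt (h / g)⌉ ≤ (N : ℤ) ∧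
    (1 / 2) * Real.logb 2 (1 + (⌈(N : ℝ) * Real.sqrt (h / g)⌉ : ℝ) * g) +
        (1 / 2) * Real.logb 2 (1 + (N : ℝ) ^ 2 * h / (⌈(N : ℝ) * Real.sqrt (h / g)⌉ : ℝ)) ≤
      Real.logb 2 (1 + 2 * (N : ℝ) * Real.sqrt (g * h)) :=
  cutset_instantiation_noncoherent_general N g h hg hh h1 h2
end

section
/- For every integer N ≥ 2 and reals g, h > 0, the capacity upper bound and lower bound of the symmetric diamond network satisfy: in each of the five regimes of Theorems 1 and 2 (cases indexed by the conditions max{g,Nh} ≥ 1; max{g,Nh} < 1 with g ≤ h; with g ∈ (h,N²h) and N√(gh) ≥ 1; with g ∈ (h,N²h) and N√(gh) < 1; with g ≥ N²h), the difference (upper bound) − (lower bound) is at most 1 + (1/2)·log 3 ≤ 1.8, and the ratio (upper bound)/(lower bound) is at most 4/ln(4/3) ≤ 14. -/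
/-!
Every regime reduces to two elementary facts about `y ↦ log (1 + y)`: scaling the argument by
`a ≥ 1` costs at most the additive constant `log a` and at most the factor `a`, i.e.
`log (1 + a y) ≤ log a + log (1 + y)` and, for integer `a`, `log (1 + a y) ≤ a log (1 + y)`
(Bernoulli). In the regimes where the effective SNR is below one, both bounds are at most
`log 3`, so the gap is small trivially and the ratio is a ratio of explicit constants. The
numerical constants come from `3⁵ ≤ 2⁸` and `log (4/3) = 2 artanh (1/7) ≥ 2/7`.
-/

open Real

lemma logb_two_three_le : logb 2 3 ≤ 8 / 5 := by
  rw [logb, div_le_iff₀ (log_pos one_lt_two)]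
  have h : log (3 ^ 5) ≤ log (2 ^ 8) := log_le_log (by norm_num) (by norm_num)
  rw [log_pow, log_pow] at h
  push_cast at h
  linarith

lemma log_four_thirds_le : log (4 / 3) ≤ 1 / 3 := by
  linarith [log_le_sub_one_of_pos (x := 4 / 3) (by norm_num)]

lemma two_div_seven_le_log_four_thirds : 2 / 7 ≤ log (4 / 3) := by
  have hs := hasSum_log_sub_log_of_abs_lt_one (x := 1 / 7) (by norm_num [abs_of_pos])
  have hfirst := le_hasSum hs 0 fun k _ => by positivity
  rw [← log_div (by norm_num) (by norm_num)] at hfirst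
  norm_num at hfirst ⊢
  exact hfirst

lemma four_div_log_four_thirds_le : 4 / log (4 / 3) ≤ 14 := by
  rw [div_le_iff₀ (log_pos (by norm_num))]
  linarith [two_div_seven_le_log_four_thirds]

lemma logb_one_add_nat_mul_le {b : ℝ} (hb : 1 < b) (n : ℕ) {y : ℝ} (hy : 0 ≤ y) :
    logb b (1 + n * y) ≤ n * logb b (1 + y) := by
  rw [← logb_pow]
  exact logb_le_logb_of_le hb (by positivity) (one_add_mul_le_pow (by linarith) n)

lemma logb_one_add_mul_le_logb_add {b a y : ℝ} (hb : 1 < b) (ha : 1 ≤ a) (hy : 0 ≤ y) :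
    logb b (1 + a * y) ≤ logb b a + logb b (1 + y) := by
  rw [← logb_mul (by positivity) (by positivity)]
  exact logb_le_logb_of_le hb (by positivity) (by nlinarith)

lemma logb_two_one_add_le_one_s15 {x : ℝ} (hx₀ : -1 < x) (hx₁ : x ≤ 1) : logb 2 (1 + x) ≤ 1 :=
  (logb_le_logb_of_le one_lt_two (by linarith) (by linarith)).trans_eq
    (logb_self_eq_one one_lt_two)

def WithinGapAndRatio (upper lower : ℝ) : Prop :=
  upper - lower ≤ 1 + (1 / 2) * logb 2 3 ∧ upper / lower ≤ 4 / log (4 / 3)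

lemma withinGapAndRatio_of_mul_le {upper lower : ℝ} (hlower : 0 ≤ lower)
    (hgap : upper - lower ≤ 1 + (1 / 2) * logb 2 3)
    (hratio : log (4 / 3) * upper ≤ 4 * lower) : WithinGapAndRatio upper lower := by
  have hc : 0 < log (4 / 3) := log_pos (by norm_num)
  refine ⟨hgap, div_le_of_le_mul₀ hlower (by positivity) ?_⟩
  rw [div_mul_eq_mul_div, le_div_iff₀ hc]
  linarith

lemma withinGapAndRatio_third {x : ℝ} (hx : 0 ≤ x) :
    WithinGapAndRatio ((1 / 2) * logb 2 (1 + x)) ((1 / 2) * logb 2 (1 + (1 / 3) * x)) := by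
  have hthird : x = 3 * ((1 / 3) * x) := by ring
  have hc : 0 < log (4 / 3) := log_pos (by norm_num)
  have hA : 0 ≤ logb 2 (1 + (1 / 3) * x) := logb_nonneg one_lt_two (by linarith)
  have hadd := logb_one_add_mul_le_logb_add one_lt_two (a := 3) (y := (1 / 3) * x)
    (by norm_num) (by positivity)
  have hmul := logb_one_add_nat_mul_le one_lt_two 3 (y := (1 / 3) * x) (by positivity)
  rw [← hthird] at hadd
  rw [Nat.cast_ofNat, ← hthird] at hmul
  refine withinGapAndRatio_of_mul_le (by positivity) ?_ ?_
  · linarith [logb_nonneg one_lt_two (by norm_num : (1 : ℝ) ≤ 3)]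
  · linarith [mul_le_mul_of_nonneg_left hmul hc.le,
      mul_le_mul_of_nonneg_right log_four_thirds_le hA]

lemma withinGapAndRatio_log_four_thirds_mul {x : ℝ} (hx₀ : 0 ≤ x) (hx₁ : x ≤ 1) :
    WithinGapAndRatio ((1 / 2) * logb 2 (1 + x))
      ((1 / 2) * log (4 / 3) * logb 2 (1 + x)) := by
  have hc : 0 < log (4 / 3) := log_pos (by norm_num)
  have hA : 0 ≤ logb 2 (1 + x) := logb_nonneg one_lt_two (by linarith)
  have hcA := mul_nonneg hc.le hA
  refine withinGapAndRatio_of_mul_le (by positivity) ?_ (by linarith)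
  linarith [logb_two_one_add_le_one_s15 (by linarith) hx₁,
    logb_nonneg one_lt_two (by norm_num : (1 : ℝ) ≤ 3)]

lemma withinGapAndRatio_of_one_le {t : ℝ} (ht : 1 ≤ t) :
    WithinGapAndRatio ((1 / 2) * logb 2 (1 + 2 * t) + 1 / 2)
      ((1 / 2) * logb 2 (1 + (1 / 3) * t)) := by
  have hsixth : 2 * t = 6 * ((1 / 3) * t) := by ring
  have hc : 0 < log (4 / 3) := log_pos (by norm_num)
  have hadd := logb_one_add_mul_le_logb_add one_lt_two (a := 6) (y := (1 / 3) * t)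
    (by norm_num) (by positivity)
  rw [← hsixth, show (6 : ℝ) = 2 * 3 by norm_num, logb_mul (by norm_num) (by norm_num),
    logb_self_eq_one one_lt_two] at hadd
  have hmul := logb_one_add_nat_mul_le one_lt_two 6 (y := (1 / 3) * t) (by positivity)
  rw [Nat.cast_ofNat, ← hsixth] at hmul
  -- `t ≥ 1` keeps the lower bound away from zero, which absorbs the extra `1 / 2` bit.
  have hA : log (4 / 3) ≤ logb 2 (1 + (1 / 3) * t) :=
    calc log (4 / 3) ≤ log (1 + (1 / 3) * t) := log_le_log (by norm_num) (by linarith)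
      _ ≤ logb 2 (1 + (1 / 3) * t) :=
        le_div_self (log_nonneg (by linarith)) (log_pos one_lt_two)
          (by linarith [log_two_lt_d9])
  refine withinGapAndRatio_of_mul_le (by linarith) (by linarith) ?_
  linarith [mul_le_mul_of_nonneg_left hmul hc.le,
    mul_le_mul_of_nonneg_right log_four_thirds_le (hc.le.trans hA)]

lemma withinGapAndRatio_two_mul {s : ℝ} (hs₀ : 0 ≤ s) (hs₁ : s ≤ 1) :
    WithinGapAndRatio (logb 2 (1 + 2 * s)) ((1 / 2) * log (4 / 3) * logb 2 (1 + s)) := by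
  have hc : 0 < log (4 / 3) := log_pos (by norm_num)
  have hA : 0 ≤ logb 2 (1 + s) := logb_nonneg one_lt_two (by linarith)
  have hB : logb 2 (1 + 2 * s) ≤ logb 2 3 :=
    logb_le_logb_of_le one_lt_two (by linarith) (by linarith)
  have hmul := logb_one_add_nat_mul_le one_lt_two 2 hs₀
  rw [Nat.cast_ofNat] at hmul
  refine withinGapAndRatio_of_mul_le (by positivity) ?_ ?_
  · linarith [logb_two_three_le, mul_nonneg hc.le hA]
  · linarith [mul_le_mul_of_nonneg_left hmul hc.le]

theorem capacity_approximation_symmetric_general (N : ℕ) (g h : ℝ)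
    (hg : 0 < g) (hh : 0 < h) :
    (1 + (1 / 2) * Real.logb 2 3 ≤ 1.8) ∧
    (4 / Real.log (4 / 3) ≤ 14) ∧
    -- Regime 1: max{g, Nh} ≥ 1
    (1 ≤ max g ((N : ℝ) * h) →
      (1 / 2) * Real.logb 2 (1 + (N : ℝ) * min g ((N : ℝ) * h)) -
          (1 / 2) * Real.logb 2 (1 + (1 / 3) * (N : ℝ) * min g ((N : ℝ) * h)) ≤
        1 + (1 / 2) * Real.logb 2 3 ∧
      ((1 / 2) * Real.logb 2 (1 + (N : ℝ) * min g ((N : ℝ) * h))) /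
          ((1 / 2) * Real.logb 2 (1 + (1 / 3) * (N : ℝ) * min g ((N : ℝ) * h))) ≤
        4 / Real.log (4 / 3)) ∧
    -- Regime 2: max{g, Nh} < 1 and g ≤ h
    (max g ((N : ℝ) * h) < 1 → g ≤ h →
      (1 / 2) * Real.logb 2 (1 + (N : ℝ) * g) -
          (1 / 2) * Real.log (4 / 3) * Real.logb 2 (1 + (N : ℝ) * g) ≤
        1 + (1 / 2) * Real.logb 2 3 ∧
      ((1 / 2) * Real.logb 2 (1 + (N : ℝ) * g)) /
          ((1 / 2) * Real.log (4 / 3) * Real.logb 2 (1 + (N : ℝ) * g)) ≤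
        4 / Real.log (4 / 3)) ∧
    -- Regime 3: max{g, Nh} < 1, h < g < N²h, N√(gh) ≥ 1
    (max g ((N : ℝ) * h) < 1 → h < g → g < (N : ℝ) ^ 2 * h →
        1 ≤ (N : ℝ) * Real.sqrt (g * h) →
      ((1 / 2) * Real.logb 2 (1 + 2 * (N : ℝ) ^ 2 * g * h) + 1 / 2) -
          (1 / 2) * Real.logb 2 (1 + (1 / 3) * (N : ℝ) ^ 2 * g * h) ≤
        1 + (1 / 2) * Real.logb 2 3 ∧
      ((1 / 2) * Real.logb 2 (1 + 2 * (N : ℝ) ^ 2 * g * h) + 1 / 2) /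
          ((1 / 2) * Real.logb 2 (1 + (1 / 3) * (N : ℝ) ^ 2 * g * h)) ≤
        4 / Real.log (4 / 3)) ∧
    -- Regime 4: max{g, Nh} < 1, h < g < N²h, N√(gh) < 1
    (max g ((N : ℝ) * h) < 1 → h < g → g < (N : ℝ) ^ 2 * h →
        (N : ℝ) * Real.sqrt (g * h) < 1 →
      Real.logb 2 (1 + 2 * (N : ℝ) * Real.sqrt (g * h)) -
          (1 / 2) * Real.log (4 / 3) * Real.logb 2 (1 + (N : ℝ) * Real.sqrt (g * h)) ≤
        1 + (1 / 2) * Real.logb 2 3 ∧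
      (Real.logb 2 (1 + 2 * (N : ℝ) * Real.sqrt (g * h))) /
          ((1 / 2) * Real.log (4 / 3) * Real.logb 2 (1 + (N : ℝ) * Real.sqrt (g * h))) ≤
        4 / Real.log (4 / 3)) ∧
    -- Regime 5: max{g, Nh} < 1 and g ≥ N²h
    (max g ((N : ℝ) * h) < 1 → (N : ℝ) ^ 2 * h ≤ g →
      (1 / 2) * Real.logb 2 (1 + (N : ℝ) ^ 2 * h) -
          (1 / 2) * Real.log (4 / 3) * Real.logb 2 (1 + (N : ℝ) ^ 2 * h) ≤
        1 + (1 / 2) * Real.logb 2 3 ∧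
      ((1 / 2) * Real.logb 2 (1 + (N : ℝ) ^ 2 * h)) /
          ((1 / 2) * Real.log (4 / 3) * Real.logb 2 (1 + (N : ℝ) ^ 2 * h)) ≤
        4 / Real.log (4 / 3)) := by
  have hgh : 0 ≤ g * h := by positivity
  refine ⟨by norm_num; linarith [logb_two_three_le], four_div_log_four_thirds_le,
    fun _ => ?_, fun hmax hle => ?_, fun _ _ _ hsnr => ?_, fun _ _ _ hsnr => ?_, fun hmax hle => ?_⟩
  · simpa only [WithinGapAndRatio, ← mul_assoc] using
      withinGapAndRatio_third (x := N * min g (N * h)) (by positivity)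
  · exact withinGapAndRatio_log_four_thirds_mul (by positivity)
      ((mul_le_mul_of_nonneg_left hle N.cast_nonneg).trans ((le_max_right _ _).trans hmax.le))
  · have hsq : (N : ℝ) ^ 2 * g * h = (N * √(g * h)) ^ 2 := by rw [mul_pow, sq_sqrt hgh]; ring
    have := withinGapAndRatio_of_one_le (t := N ^ 2 * g * h) (hsq ▸ one_le_pow₀ hsnr)
    simpa only [WithinGapAndRatio, ← mul_assoc] using this
  · simpa only [WithinGapAndRatio, ← mul_assoc] using
      withinGapAndRatio_two_mul (s := N * √(g * h)) (by positivity) hsnr.le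
  · exact withinGapAndRatio_log_four_thirds_mul (by positivity)
      (hle.trans ((le_max_left _ _).trans hmax.le))

theorem capacity_approximation_symmetric (N : ℕ) (hN : 2 ≤ N) (g h : ℝ)
    (hg : 0 < g) (hh : 0 < h) :
    (1 + (1 / 2) * Real.logb 2 3 ≤ 1.8) ∧
    (4 / Real.log (4 / 3) ≤ 14) ∧
    -- Regime 1: max{g, Nh} ≥ 1
    (1 ≤ max g ((N : ℝ) * h) →
      (1 / 2) * Real.logb 2 (1 + (N : ℝ) * min g ((N : ℝ) * h)) -
          (1 / 2) * Real.logb 2 (1 + (1 / 3) * (N : ℝ) * min g ((N : ℝ) * h)) ≤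
        1 + (1 / 2) * Real.logb 2 3 ∧
      ((1 / 2) * Real.logb 2 (1 + (N : ℝ) * min g ((N : ℝ) * h))) /
          ((1 / 2) * Real.logb 2 (1 + (1 / 3) * (N : ℝ) * min g ((N : ℝ) * h))) ≤
        4 / Real.log (4 / 3)) ∧
    -- Regime 2: max{g, Nh} < 1 and g ≤ h
    (max g ((N : ℝ) * h) < 1 → g ≤ h →
      (1 / 2) * Real.logb 2 (1 + (N : ℝ) * g) -
          (1 / 2) * Real.log (4 / 3) * Real.logb 2 (1 + (N : ℝ) * g) ≤
        1 + (1 / 2) * Real.logb 2 3 ∧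
      ((1 / 2) * Real.logb 2 (1 + (N : ℝ) * g)) /
          ((1 / 2) * Real.log (4 / 3) * Real.logb 2 (1 + (N : ℝ) * g)) ≤
        4 / Real.log (4 / 3)) ∧
    -- Regime 3: max{g, Nh} < 1, h < g < N²h, N√(gh) ≥ 1
    (max g ((N : ℝ) * h) < 1 → h < g → g < (N : ℝ) ^ 2 * h →
        1 ≤ (N : ℝ) * Real.sqrt (g * h) →
      ((1 / 2) * Real.logb 2 (1 + 2 * (N : ℝ) ^ 2 * g * h) + 1 / 2) -
          (1 / 2) * Real.logb 2 (1 + (1 / 3) * (N : ℝ) ^ 2 * g * h) ≤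
        1 + (1 / 2) * Real.logb 2 3 ∧
      ((1 / 2) * Real.logb 2 (1 + 2 * (N : ℝ) ^ 2 * g * h) + 1 / 2) /
          ((1 / 2) * Real.logb 2 (1 + (1 / 3) * (N : ℝ) ^ 2 * g * h)) ≤
        4 / Real.log (4 / 3)) ∧
    -- Regime 4: max{g, Nh} < 1, h < g < N²h, N√(gh) < 1
    (max g ((N : ℝ) * h) < 1 → h < g → g < (N : ℝ) ^ 2 * h →
        (N : ℝ) * Real.sqrt (g * h) < 1 →
      Real.logb 2 (1 + 2 * (N : ℝ) * Real.sqrt (g * h)) -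
          (1 / 2) * Real.log (4 / 3) * Real.logb 2 (1 + (N : ℝ) * Real.sqrt (g * h)) ≤
        1 + (1 / 2) * Real.logb 2 3 ∧
      (Real.logb 2 (1 + 2 * (N : ℝ) * Real.sqrt (g * h))) /
          ((1 / 2) * Real.log (4 / 3) * Real.logb 2 (1 + (N : ℝ) * Real.sqrt (g * h))) ≤
        4 / Real.log (4 / 3)) ∧
    -- Regime 5: max{g, Nh} < 1 and g ≥ N²h
    (max g ((N : ℝ) * h) < 1 → (N : ℝ) ^ 2 * h ≤ g →
      (1 / 2) * Real.logb 2 (1 + (N : ℝ) ^ 2 * h) -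
          (1 / 2) * Real.log (4 / 3) * Real.logb 2 (1 + (N : ℝ) ^ 2 * h) ≤
        1 + (1 / 2) * Real.logb 2 3 ∧
      ((1 / 2) * Real.logb 2 (1 + (N : ℝ) ^ 2 * h)) /
          ((1 / 2) * Real.log (4 / 3) * Real.logb 2 (1 + (N : ℝ) ^ 2 * h)) ≤
        4 / Real.log (4 / 3)) :=
  capacity_approximation_symmetric_general N g h hg hh
end
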